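/- arXiv:1401.3147 — 3 statements merged into one kernel-verified Lean document; each statement's English description precedes it below -/
import Mathlib

section
/- For every weighted finite graph G and each 1 ≤ k ≤ N, h̄(k) = 1 if and only if G has at least k connected components each of whose induced subgraphs is bipartite (i.e. there exist at least k distinct connected components C such that C can be partitioned into two disjoint sets A, B with w(u,v) = 0 whenever u,v ∈ A or u,v ∈ B). -/
open Finset

namespace DualCheeger

variable {N : ℕ}

/-- The degree of a vertex `u`: `d_u = ∑_v w u v`. -/
def degree (w : Fin N → Fin N → ℝ) (u : Fin N) : ℝ := ∑ v, w u v

/-- A weighted finite graph structure on `Fin N`: symmetric nonnegative weights,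
no self-loops, and strictly positive degrees. -/
def IsWeightedGraph (w : Fin N → Fin N → ℝ) : Prop :=
  (∀ u v, w u v = w v u) ∧ (∀ u v, 0 ≤ w u v) ∧ (∀ u, w u u = 0) ∧
    ∀ u, 0 < degree w u

/-- `|E(A,B)| = ∑_{u ∈ A} ∑_{v ∈ B} w u v`. -/
def Ew (w : Fin N → Fin N → ℝ) (A B : Finset (Fin N)) : ℝ :=
  ∑ u ∈ A, ∑ v ∈ B, w u v

/-- `vol(A) = ∑_{u ∈ A} d_u`. -/
def vol (w : Fin N → Fin N → ℝ) (A : Finset (Fin N)) : ℝ := ∑ u ∈ A, degree w u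

/-- The expansion `φ(S) = |E(S, Sᶜ)| / vol(S)`. -/
noncomputable def expansion (w : Fin N → Fin N → ℝ) (S : Finset (Fin N)) : ℝ :=
  Ew w S Sᶜ / vol w S

/-- `φ̄(V₁,V₂) = 2|E(V₁,V₂)| / vol(V₁ ∪ V₂)`. -/
noncomputable def phibar (w : Fin N → Fin N → ℝ) (V₁ V₂ : Finset (Fin N)) : ℝ :=
  2 * Ew w V₁ V₂ / vol w (V₁ ∪ V₂)

/-- A `k`-subpartition: `k` nonempty pairwise disjoint subsets. -/
def IsSubpartition (k : ℕ) (P : Fin k → Finset (Fin N)) : Prop :=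
  (∀ i, (P i).Nonempty) ∧ ∀ i j, i ≠ j → Disjoint (P i) (P j)

/-- The `k`-way Cheeger constant `h(k)`. -/
noncomputable def cheeger (w : Fin N → Fin N → ℝ) (k : ℕ) : ℝ :=
  sInf { x | ∃ P : Fin k → Finset (Fin N), IsSubpartition k P ∧
    x = ⨆ i, expansion w (P i) }

/-- A `k`-sub-bipartition: `k` pairs of subsets, all `2k` subsets pairwise
disjoint, with each union `V_{2i-1} ∪ V_{2i}` nonempty. -/
def IsSubBipartition (k : ℕ) (P : Fin k → Finset (Fin N) × Finset (Fin N)) : Prop :=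
  (∀ i, Disjoint (P i).1 (P i).2) ∧
    (∀ i j, i ≠ j → Disjoint ((P i).1 ∪ (P i).2) ((P j).1 ∪ (P j).2)) ∧
    ∀ i, ((P i).1 ∪ (P i).2).Nonempty

/-- The `k`-way dual Cheeger constant `h̄(k)`. -/
noncomputable def dualCheeger (w : Fin N → Fin N → ℝ) (k : ℕ) : ℝ :=
  sSup { x | ∃ P : Fin k → Finset (Fin N) × Finset (Fin N), IsSubBipartition k P ∧
    x = ⨅ i, phibar w (P i).1 (P i).2 }

/-- `lam` enumerates the eigenvalues of the normalized Laplacian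
`Δ f (u) = f u - d_u⁻¹ ∑_v w u v * f v` in nondecreasing order with multiplicity,
witnessed by a `μ`-orthonormal eigenbasis `f`. -/
def IsLapEigenbasis (w : Fin N → Fin N → ℝ) (lam : Fin N → ℝ)
    (f : Fin N → Fin N → ℝ) : Prop :=
  Monotone lam ∧
    (∀ i j, (∑ u, degree w u * f i u * f j u) = if i = j then (1 : ℝ) else 0) ∧
    ∀ i u, f i u - (degree w u)⁻¹ * ∑ v, w u v * f i v = lam i * f i u

/-- The dual Rayleigh quotient of a function `f : V → ℝ`. -/
noncomputable def dualRayleigh (w : Fin N → Fin N → ℝ) (f : Fin N → ℝ) : ℝ :=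
  (1 / 2 * ∑ u, ∑ v, w u v * (f u + f v) ^ 2) / ∑ u, degree w u * f u ^ 2

/-- The dual Rayleigh quotient of a map `F : V → ℝ^k`. -/
noncomputable def dualRayleighVec (w : Fin N → Fin N → ℝ) {k : ℕ}
    (F : Fin N → EuclideanSpace ℝ (Fin k)) : ℝ :=
  (1 / 2 * ∑ u, ∑ v, w u v * ‖F u + F v‖ ^ 2) / ∑ u, degree w u * ‖F u‖ ^ 2

/-- The rough projective-space distance `d̄_F` between (the projections of)
`F u` and `F v`. -/
noncomputable def dbar {k : ℕ} (F : Fin N → EuclideanSpace ℝ (Fin k))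
    (u v : Fin N) : ℝ :=
  min ‖‖F u‖⁻¹ • F u - ‖F v‖⁻¹ • F v‖ ‖‖F u‖⁻¹ • F u + ‖F v‖⁻¹ • F v‖

/-- The `l²` mass of `F` on `S`: `ℰ_S = ∑_{u ∈ S} d_u ‖F u‖²`. -/
noncomputable def mass (w : Fin N → Fin N → ℝ) {k : ℕ}
    (F : Fin N → EuclideanSpace ℝ (Fin k)) (S : Finset (Fin N)) : ℝ :=
  ∑ u ∈ S, degree w u * ‖F u‖ ^ 2

/-- The distance `d̄_F(v, T)` from a vertex to a set. -/
noncomputable def dbarSet {k : ℕ} (F : Fin N → EuclideanSpace ℝ (Fin k))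
    (v : Fin N) (T : Set (Fin N)) : ℝ :=
  sInf { x | ∃ t ∈ T, x = dbar F v t }

/-- The modified dual Cheeger constant `h̄*(k)`. -/
noncomputable def dualCheegerStar (w : Fin N → Fin N → ℝ) (k : ℕ) : ℝ :=
  sSup { x | ∃ P : Fin k → Finset (Fin N) × Finset (Fin N), IsSubBipartition k P ∧
    x = ⨅ i, (2 * Ew w (P i).1 (P i).2 + 1 / 2 * Ew w ((P i).1 ∪ (P i).2)
        (Finset.univ \ Finset.univ.biUnion (fun j => (P j).1 ∪ (P j).2))) /
      vol w ((P i).1 ∪ (P i).2) }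

/-- `G` is bipartite: `V = A ∪ Aᶜ` with no edges inside `A` nor inside `Aᶜ`. -/
def IsBipartite (w : Fin N → Fin N → ℝ) : Prop :=
  ∃ A : Finset (Fin N), (∀ u ∈ A, ∀ v ∈ A, w u v = 0) ∧
    ∀ u ∈ Aᶜ, ∀ v ∈ Aᶜ, w u v = 0

/-- The equivalence relation generated by adjacency (connected components). -/
def Reach (w : Fin N → Fin N → ℝ) : Fin N → Fin N → Prop :=
  Relation.EqvGen fun u v => 0 < w u v

/-- `w` is the weight function of a weighted cycle on `Fin N`: symmetric,
nonnegative, and positive exactly on consecutive vertices mod `N`. -/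
def IsCycleWeight (N : ℕ) (w : Fin N → Fin N → ℝ) : Prop :=
  (∀ u v, w u v = w v u) ∧ (∀ u v, 0 ≤ w u v) ∧
    ∀ i j : Fin N, 0 < w i j ↔ ((i.val + 1) % N = j.val ∨ (j.val + 1) % N = i.val)

/-- The unweighted cycle on `Fin N`. -/
noncomputable def cycleWeight (N : ℕ) : Fin N → Fin N → ℝ := fun i j =>
  if (i.val + 1) % N = j.val ∨ (j.val + 1) % N = i.val then 1 else 0

section Aux
variable {w : Fin N → Fin N → ℝ}

lemma Ew_symm (hsym : ∀ u v, w u v = w v u) (A B : Finset (Fin N)) :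
    Ew w A B = Ew w B A := by
  unfold Ew
  rw [Finset.sum_comm]
  exact Finset.sum_congr rfl fun v _ => Finset.sum_congr rfl fun u _ => hsym u v

lemma vol_union_split (hsym : ∀ u v, w u v = w v u) {A B : Finset (Fin N)}
    (hd : Disjoint A B) :
    vol w (A ∪ B) = 2 * Ew w A B +
      ((∑ u ∈ A, ∑ v ∈ Bᶜ, w u v) + ∑ u ∈ B, ∑ v ∈ Aᶜ, w u v) := by
  have hA : ∑ u ∈ A, degree w u = Ew w A B + ∑ u ∈ A, ∑ v ∈ Bᶜ, w u v := by
    rw [Ew, ← Finset.sum_add_distrib]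
    exact Finset.sum_congr rfl fun u _ => (Finset.sum_add_sum_compl B (w u)).symm
  have hB : ∑ u ∈ B, degree w u = Ew w B A + ∑ u ∈ B, ∑ v ∈ Aᶜ, w u v := by
    rw [Ew, ← Finset.sum_add_distrib]
    exact Finset.sum_congr rfl fun u _ => (Finset.sum_add_sum_compl A (w u)).symm
  rw [vol, Finset.sum_union hd, hA, hB, Ew_symm hsym A B]
  ring

lemma vol_pos (hdeg : ∀ u, 0 < degree w u) {A : Finset (Fin N)} (hA : A.Nonempty) :
    0 < vol w A :=
  Finset.sum_pos (fun u _ => hdeg u) hA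

lemma Ew_nonneg (h0 : ∀ u v, 0 ≤ w u v) (A B : Finset (Fin N)) : 0 ≤ Ew w A B :=
  Finset.sum_nonneg fun u _ => Finset.sum_nonneg fun v _ => h0 u v

lemma two_Ew_le_vol (hsym : ∀ u v, w u v = w v u) (h0 : ∀ u v, 0 ≤ w u v)
    {A B : Finset (Fin N)} (hd : Disjoint A B) :
    2 * Ew w A B ≤ vol w (A ∪ B) := by
  rw [vol_union_split hsym hd]
  have := Ew_nonneg h0 A Bᶜ
  have := Ew_nonneg h0 B Aᶜ
  unfold Ew at *
  linarith

lemma phibar_le_one (hG : IsWeightedGraph w) {A B : Finset (Fin N)}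
    (hd : Disjoint A B) (hne : (A ∪ B).Nonempty) : phibar w A B ≤ 1 := by
  obtain ⟨hsym, h0, -, hdeg⟩ := hG
  rw [phibar, div_le_one (vol_pos hdeg hne)]
  exact two_Ew_le_vol hsym h0 hd

/-- If `φ̄(A,B) = 1` then every edge incident to `A` goes to `B` and conversely. -/
lemma phibar_eq_one_structure (hG : IsWeightedGraph w) {A B : Finset (Fin N)}
    (hd : Disjoint A B) (hne : (A ∪ B).Nonempty) (h1 : phibar w A B = 1) :
    (∀ u ∈ A, ∀ v, v ∉ B → w u v = 0) ∧ ∀ u ∈ B, ∀ v, v ∉ A → w u v = 0 := by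
  obtain ⟨hsym, h0, -, hdeg⟩ := hG
  have hv : 0 < vol w (A ∪ B) := vol_pos hdeg hne
  have heq : 2 * Ew w A B = vol w (A ∪ B) := by
    have := h1
    rw [phibar, div_eq_one_iff_eq (ne_of_gt hv)] at this
    exact this
  have hz : (∑ u ∈ A, ∑ v ∈ Bᶜ, w u v) + ∑ u ∈ B, ∑ v ∈ Aᶜ, w u v = 0 := by
    have := vol_union_split hsym hd (w := w)
    rw [heq] at this
    linarith
  have hnn1 : 0 ≤ ∑ u ∈ A, ∑ v ∈ Bᶜ, w u v := Ew_nonneg h0 A Bᶜ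
  have hnn2 : 0 ≤ ∑ u ∈ B, ∑ v ∈ Aᶜ, w u v := Ew_nonneg h0 B Aᶜ
  have hz1 : ∑ u ∈ A, ∑ v ∈ Bᶜ, w u v = 0 := le_antisymm (by linarith) hnn1
  have hz2 : ∑ u ∈ B, ∑ v ∈ Aᶜ, w u v = 0 := le_antisymm (by linarith) hnn2
  constructor
  · intro u hu v hv'
    have hu' := (Finset.sum_eq_zero_iff_of_nonneg
      (fun u _ => Finset.sum_nonneg fun v _ => h0 u v)).mp hz1 u hu
    exact (Finset.sum_eq_zero_iff_of_nonneg (fun v _ => h0 u v)).mp hu' v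
      (Finset.mem_compl.mpr hv')
  · intro u hu v hv'
    have hu' := (Finset.sum_eq_zero_iff_of_nonneg
      (fun u _ => Finset.sum_nonneg fun v _ => h0 u v)).mp hz2 u hu
    exact (Finset.sum_eq_zero_iff_of_nonneg (fun v _ => h0 u v)).mp hu' v
      (Finset.mem_compl.mpr hv')

/-- A set closed under positive-weight adjacency is a union of `Reach` classes. -/
lemma reach_mem_iff (hsym : ∀ u v, w u v = w v u) {S : Set (Fin N)}
    (hcl : ∀ u ∈ S, ∀ v, 0 < w u v → v ∈ S) {a b : Fin N} (h : Reach w a b) :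
    a ∈ S ↔ b ∈ S := by
  induction h with
  | rel u v huv =>
      constructor
      · exact fun hu => hcl u hu v huv
      · exact fun hv => hcl v hv u (by rw [hsym v u]; exact huv)
  | refl u => exact Iff.rfl
  | symm _ _ _ ih => exact ih.symm
  | trans _ _ _ _ _ ih1 ih2 => exact ih1.trans ih2

end Aux

/-- Proposition 3.1 (i): `h̄(k) = 1` iff `G` has at least `k` connected
components, each of which is bipartite. -/
theorem dualCheeger_eq_one_iff {N : ℕ} (w : Fin N → Fin N → ℝ)
    (hG : IsWeightedGraph w) (k : ℕ) (hk : 1 ≤ k) (hkN : k ≤ N) :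
    dualCheeger w k = 1 ↔
      ∃ c : Fin k → Fin N,
        (∀ i j, i ≠ j → ¬ Reach w (c i) (c j)) ∧
        ∀ i, ∃ A B : Set (Fin N),
          A ∪ B = {v | Reach w (c i) v} ∧ A ∩ B = ∅ ∧
          (∀ u ∈ A, ∀ v ∈ A, w u v = 0) ∧ ∀ u ∈ B, ∀ v ∈ B, w u v = 0 := by
  classical
  obtain ⟨hsym, h0, hloop, hdeg⟩ := hG
  have hG' : IsWeightedGraph w := ⟨hsym, h0, hloop, hdeg⟩
  haveI : Nonempty (Fin k) := ⟨⟨0, hk⟩⟩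
  set S : Set ℝ := {x | ∃ P : Fin k → Finset (Fin N) × Finset (Fin N),
    IsSubBipartition k P ∧ x = ⨅ i, phibar w (P i).1 (P i).2} with hSdef
  have hdC : dualCheeger w k = sSup S := rfl
  have hSfin : S.Finite := by
    apply Set.Finite.subset (Set.finite_range
      (fun P : Fin k → Finset (Fin N) × Finset (Fin N) =>
        ⨅ i, phibar w (P i).1 (P i).2))
    rintro x ⟨P, -, rfl⟩
    exact ⟨P, rfl⟩
  have hSne : S.Nonempty := by
    refine ⟨_, fun i => ({Fin.castLE hkN i}, ∅), ⟨?_, ?_, ?_⟩, rfl⟩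
    · intro i; simp
    · intro i j hij
      simp only [Finset.union_empty, Finset.disjoint_singleton]
      exact fun h => hij (Fin.castLE_injective hkN h)
    · intro i; simp
  have hle1 : ∀ x ∈ S, x ≤ 1 := by
    rintro x ⟨P, ⟨hPd, hPdis, hPne⟩, rfl⟩
    calc ⨅ i, phibar w (P i).1 (P i).2
        ≤ phibar w (P (Classical.arbitrary _)).1 (P (Classical.arbitrary _)).2 :=
          ciInf_le ((Set.finite_range _).bddBelow) _
      _ ≤ 1 := phibar_le_one hG' (hPd _) (hPne _)
  constructor
  · -- forward
    intro h
    have h1S : (1 : ℝ) ∈ S := by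
      rw [← h, hdC]; exact hSne.csSup_mem hSfin
    obtain ⟨P, ⟨hPd, hPdis, hPne⟩, hPeq⟩ := h1S
    have hall : ∀ i, phibar w (P i).1 (P i).2 = 1 := by
      intro i
      refine le_antisymm (phibar_le_one hG' (hPd i) (hPne i)) ?_
      rw [hPeq]
      exact ciInf_le ((Set.finite_range _).bddBelow) i
    have hstr := fun i => phibar_eq_one_structure hG' (hPd i) (hPne i) (hall i)
    have hcl : ∀ i, ∀ u ∈ (((P i).1 ∪ (P i).2 : Finset (Fin N)) : Set (Fin N)),
        ∀ v, 0 < w u v →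
        v ∈ (((P i).1 ∪ (P i).2 : Finset (Fin N)) : Set (Fin N)) := by
      intro i u hu v hv
      rcases Finset.mem_union.mp hu with h1 | h2
      · have : v ∈ (P i).2 := by
          by_contra hv2
          exact absurd ((hstr i).1 u h1 v hv2) (ne_of_gt hv)
        exact Finset.mem_coe.mpr (Finset.mem_union_right _ this)
      · have : v ∈ (P i).1 := by
          by_contra hv1
          exact absurd ((hstr i).2 u h2 v hv1) (ne_of_gt hv)
        exact Finset.mem_coe.mpr (Finset.mem_union_left _ this)
    choose c hc using hPne
    refine ⟨c, ?_, ?_⟩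
    · intro i j hij hr
      have hcj : c j ∈ (((P i).1 ∪ (P i).2 : Finset (Fin N)) : Set (Fin N)) :=
        (reach_mem_iff hsym (hcl i) hr).mp (Finset.mem_coe.mpr (hc i))
      exact Finset.disjoint_left.mp (hPdis i j hij) (Finset.mem_coe.mp hcj) (hc j)
    · intro i
      refine ⟨(↑(P i).1 ∩ {v | Reach w (c i) v}),
        (↑(P i).2 ∩ {v | Reach w (c i) v}), ?_, ?_, ?_, ?_⟩
      · ext v
        simp only [Set.mem_union, Set.mem_inter_iff, Set.mem_setOf_eq,
          Finset.mem_coe]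
        constructor
        · rintro (⟨-, h⟩ | ⟨-, h⟩) <;> exact h
        · intro hr
          have : v ∈ (((P i).1 ∪ (P i).2 : Finset (Fin N)) : Set (Fin N)) :=
            (reach_mem_iff hsym (hcl i) hr).mp (Finset.mem_coe.mpr (hc i))
          rcases Finset.mem_union.mp this with h1 | h2
          exacts [Or.inl ⟨h1, hr⟩, Or.inr ⟨h2, hr⟩]
      · rw [Set.eq_empty_iff_forall_notMem]
        rintro v ⟨⟨h1, -⟩, h2, -⟩
        exact Finset.disjoint_left.mp (hPd i) (Finset.mem_coe.mp h1)
          (Finset.mem_coe.mp h2)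
      · intro u hu v hv
        exact (hstr i).1 u (Finset.mem_coe.mp hu.1) v
          (Finset.disjoint_left.mp (hPd i) (Finset.mem_coe.mp hv.1))
      · intro u hu v hv
        exact (hstr i).2 u (Finset.mem_coe.mp hu.1) v
          (Finset.disjoint_right.mp (hPd i) (Finset.mem_coe.mp hv.1))
  · -- backward
    rintro ⟨c, hpair, hbip⟩
    choose A B hAB hABi hA hB using hbip
    set V1 : Fin k → Finset (Fin N) := fun i => univ.filter (· ∈ A i) with hV1
    set V2 : Fin k → Finset (Fin N) := fun i => univ.filter (· ∈ B i) with hV2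
    have hm1 : ∀ i v, v ∈ V1 i ↔ v ∈ A i := by
      intro i v; simp [hV1]
    have hm2 : ∀ i v, v ∈ V2 i ↔ v ∈ B i := by
      intro i v; simp [hV2]
    have hmU : ∀ i v, v ∈ V1 i ∪ V2 i ↔ Reach w (c i) v := by
      intro i v
      rw [Finset.mem_union, hm1, hm2]
      constructor
      · rintro (h1 | h2)
        · have : v ∈ A i ∪ B i := Or.inl h1
          rw [hAB i] at this; exact this
        · have : v ∈ A i ∪ B i := Or.inr h2
          rw [hAB i] at this; exact this
      · intro hr
        have : v ∈ A i ∪ B i := by rw [hAB i]; exact hr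
        exact this
    have hdisj : ∀ i, Disjoint (V1 i) (V2 i) := by
      intro i
      rw [Finset.disjoint_left]
      intro v hv1 hv2
      have : v ∈ A i ∩ B i := ⟨(hm1 i v).mp hv1, (hm2 i v).mp hv2⟩
      rw [hABi i] at this
      exact this
    have hP : IsSubBipartition k (fun i => (V1 i, V2 i)) := by
      refine ⟨hdisj, ?_, ?_⟩
      · intro i j hij
        rw [Finset.disjoint_left]
        intro v hvi hvj
        exact hpair i j hij (Relation.EqvGen.trans _ _ _ ((hmU i v).mp hvi)
          (Relation.EqvGen.symm _ _ ((hmU j v).mp hvj)))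
      · intro i
        exact ⟨c i, (hmU i (c i)).mpr (Relation.EqvGen.refl _)⟩
    have hvol : ∀ i, vol w (V1 i ∪ V2 i) = 2 * Ew w (V1 i) (V2 i) := by
      intro i
      have hzero : ∀ u ∈ V1 i ∪ V2 i, ∀ v, v ∉ V1 i ∪ V2 i → w u v = 0 := by
        intro u hu v hv
        by_contra hne
        have hpos : 0 < w u v := lt_of_le_of_ne (h0 u v) (Ne.symm hne)
        exact hv ((hmU i v).mpr
          (Relation.EqvGen.trans _ _ _ ((hmU i u).mp hu)
            (Relation.EqvGen.rel _ _ hpos)))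
      have h1 : vol w (V1 i ∪ V2 i) = Ew w (V1 i ∪ V2 i) (V1 i ∪ V2 i) := by
        rw [vol, Ew]
        refine Finset.sum_congr rfl fun u hu => ?_
        rw [degree, ← Finset.sum_add_sum_compl (V1 i ∪ V2 i) (w u)]
        have : ∑ v ∈ (V1 i ∪ V2 i)ᶜ, w u v = 0 :=
          Finset.sum_eq_zero fun v hv =>
            hzero u hu v (Finset.mem_compl.mp hv)
        rw [this, add_zero]
      have hEzero1 : Ew w (V1 i) (V1 i) = 0 :=
        Finset.sum_eq_zero fun u hu => Finset.sum_eq_zero fun v hv =>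
          hA i u ((hm1 i u).mp hu) v ((hm1 i v).mp hv)
      have hEzero2 : Ew w (V2 i) (V2 i) = 0 :=
        Finset.sum_eq_zero fun u hu => Finset.sum_eq_zero fun v hv =>
          hB i u ((hm2 i u).mp hu) v ((hm2 i v).mp hv)
      have hsplit : Ew w (V1 i ∪ V2 i) (V1 i ∪ V2 i) =
          Ew w (V1 i) (V1 i) + Ew w (V1 i) (V2 i) +
            (Ew w (V2 i) (V1 i) + Ew w (V2 i) (V2 i)) := by
        unfold Ew
        rw [Finset.sum_union (hdisj i)]
        congr 1 <;>
        · rw [← Finset.sum_add_distrib]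
          exact Finset.sum_congr rfl fun u _ => Finset.sum_union (hdisj i)
      rw [h1, hsplit, hEzero1, hEzero2, Ew_symm hsym (V2 i) (V1 i)]
      ring
    have hall : ∀ i, phibar w (V1 i) (V2 i) = 1 := by
      intro i
      have hvpos : 0 < vol w (V1 i ∪ V2 i) := vol_pos hdeg (hP.2.2 i)
      rw [phibar, ← hvol i, div_self (ne_of_gt hvpos)]
    have h1S : (1 : ℝ) ∈ S := by
      refine ⟨fun i => (V1 i, V2 i), hP, ?_⟩
      have : (fun i => phibar w (V1 i) (V2 i)) = fun _ : Fin k => (1 : ℝ) :=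
        funext hall
      rw [show (⨅ i, phibar w (V1 i) (V2 i)) = ⨅ _ : Fin k, (1 : ℝ) by rw [this]]
      rw [ciInf_const]
    rw [hdC]
    exact le_antisymm (csSup_le hSne hle1) (le_csSup hSfin.bddAbove h1S)


end DualCheeger
end

section
/- For every weighted finite graph G and every function f: V → ℝ with supp(f) ≠ ∅, there exist two subsets V₁, V₂ ⊆ supp(f) with V₁ ∩ V₂ = ∅ and V₁ ∪ V₂ ≠ ∅ such that R̄(f) ≥ 1 − √(1 − (1 − φ̄(V₁,V₂))²). -/
open Finset

namespace DualCheeger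

noncomputable def prevLevel (P : Finset ℝ) (s : ℝ) : ℝ :=
  ((insert (0:ℝ) (P.filter (· < s))).max' (insert_nonempty _ _))

lemma prevLevel_nonneg (P : Finset ℝ) (s : ℝ) : 0 ≤ prevLevel P s :=
  Finset.le_max' _ _ (mem_insert_self _ _)

lemma prevLevel_mem (P : Finset ℝ) (s : ℝ) : prevLevel P s = 0 ∨ prevLevel P s ∈ P := by
  have h := Finset.max'_mem (insert (0:ℝ) (P.filter (· < s))) (insert_nonempty _ _)
  rcases Finset.mem_insert.1 h with h | h
  · exact Or.inl h
  · exact Or.inr (Finset.mem_filter.1 h).1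

lemma prevLevel_lt (P : Finset ℝ) {s : ℝ} (hs : 0 < s) : prevLevel P s < s := by
  refine (Finset.max'_lt_iff _ _).2 ?_
  intro b hb
  rcases Finset.mem_insert.1 hb with rfl | hb
  · exact hs
  · exact (Finset.mem_filter.1 hb).2

lemma telescope_aux (P : Finset ℝ) (hP : ∀ s ∈ P, 0 < s) :
    ∀ (n : ℕ) (a : ℝ), (P.filter (· ≤ a)).card = n → (a = 0 ∨ a ∈ P) →
      ∑ s ∈ P.filter (· ≤ a), (s ^ 2 - prevLevel P s ^ 2) = a ^ 2 := by
  intro n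
  induction n using Nat.strong_induction_on with
  | _ n ih =>
    intro a hcard ha
    rcases ha with rfl | haP
    · have h0 : P.filter (· ≤ (0:ℝ)) = ∅ := by
        refine Finset.filter_eq_empty_iff.2 ?_
        intro s hs hle
        exact absurd (hP s hs) (by simp at hle ⊢; linarith)
      rw [h0]; simp
    · have ha0 : 0 < a := hP a haP
      have hb0 : 0 ≤ prevLevel P a := prevLevel_nonneg P a
      have hbmem := prevLevel_mem P a
      have hba : prevLevel P a < a := prevLevel_lt P ha0
      have hset : P.filter (· ≤ a) = insert a (P.filter (· ≤ prevLevel P a)) := by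
        ext s
        simp only [Finset.mem_filter, Finset.mem_insert]
        constructor
        · rintro ⟨hsP, hsa⟩
          rcases eq_or_lt_of_le hsa with h | h
          · exact Or.inl h
          · refine Or.inr ⟨hsP, Finset.le_max' _ _
              (Finset.mem_insert_of_mem ?_)⟩
            exact Finset.mem_filter.2 ⟨hsP, h⟩
        · rintro (rfl | ⟨hsP, hsb⟩)
          · exact ⟨haP, le_refl _⟩
          · exact ⟨hsP, hsb.trans hba.le⟩
      have hanotin : a ∉ P.filter (· ≤ prevLevel P a) := by
        intro h
        exact absurd ((Finset.mem_filter.1 h).2.trans_lt hba) (lt_irrefl a)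
      have hcard' : (P.filter (· ≤ prevLevel P a)).card < n := by
        rw [hset, Finset.card_insert_of_notMem hanotin] at hcard
        omega
      have hrec := ih _ hcard' (prevLevel P a) rfl hbmem
      rw [hset, Finset.sum_insert hanotin, hrec]
      ring

lemma telescope (P : Finset ℝ) (hP : ∀ s ∈ P, 0 < s) (a : ℝ) (ha : a = 0 ∨ a ∈ P) :
    ∑ s ∈ P.filter (· ≤ a), (s ^ 2 - prevLevel P s ^ 2) = a ^ 2 :=
  telescope_aux P hP _ a rfl ha

lemma pointwise_bound (a b : ℝ) :
    (a ^ 2 + b ^ 2) / 2 -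
        (min (max a 0) (max (-b) 0) ^ 2 + min (max (-a) 0) (max b 0) ^ 2) ≤
      |a + b| * (|a| + |b|) / 2 - max (a * b) 0 := by
  rcases le_total a 0 with ha | ha <;> rcases le_total b 0 with hb | hb
  · rw [max_eq_right ha, max_eq_right hb, max_eq_left (neg_nonneg.2 ha),
      max_eq_left (neg_nonneg.2 hb), max_eq_left (show (0:ℝ) ≤ a * b by nlinarith),
      abs_of_nonpos (add_nonpos ha hb), abs_of_nonpos ha, abs_of_nonpos hb,
      min_eq_left (neg_nonneg.2 hb), min_eq_right (neg_nonneg.2 ha)]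
    nlinarith
  · rw [max_eq_right ha, max_eq_left hb, max_eq_left (neg_nonneg.2 ha),
      max_eq_right (neg_nonpos.2 hb), max_eq_right (show a * b ≤ 0 by nlinarith),
      abs_of_nonpos ha, abs_of_nonneg hb, min_self]
    rcases le_total (-a) b with h | h
    · rw [min_eq_left h, abs_of_nonneg (by linarith)]; nlinarith
    · rw [min_eq_right h, abs_of_nonpos (by linarith)]; nlinarith
  · rw [max_eq_left ha, max_eq_right hb, max_eq_right (neg_nonpos.2 ha),
      max_eq_left (neg_nonneg.2 hb), max_eq_right (show a * b ≤ 0 by nlinarith),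
      abs_of_nonneg ha, abs_of_nonpos hb, min_self]
    rcases le_total a (-b) with h | h
    · rw [min_eq_left h, abs_of_nonpos (by linarith)]; nlinarith
    · rw [min_eq_right h, abs_of_nonneg (by linarith)]; nlinarith
  · rw [max_eq_left ha, max_eq_left hb, max_eq_right (neg_nonpos.2 ha),
      max_eq_right (neg_nonpos.2 hb), max_eq_left (mul_nonneg ha hb),
      abs_of_nonneg (add_nonneg ha hb), abs_of_nonneg ha, abs_of_nonneg hb,
      min_eq_right ha, min_eq_left hb]
    nlinarith


variable {N : ℕ}

lemma final_aux {A D φ : ℝ} (hDpos : 0 < D) (hAD : A < D) (hA0 : 0 ≤ A) (hφ1 : φ ≤ 1)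
    (h : (1 - φ) ^ 2 * D ^ 2 ≤ A * (2 * D - A)) :
    1 - Real.sqrt (1 - (1 - φ) ^ 2) ≤ A / D := by
  have hD2 : (0:ℝ) < D ^ 2 := by positivity
  have hnn : 0 ≤ 1 - (1 - φ) ^ 2 := by nlinarith [sq_nonneg (D - A)]
  have hkey2 : (D - A) / D ≤ Real.sqrt (1 - (1 - φ) ^ 2) := by
    rw [Real.le_sqrt (div_nonneg (by linarith) hDpos.le) hnn, div_pow, div_le_iff₀ hD2]
    nlinarith
  have hid : 1 - A / D = (D - A) / D := by field_simp
  linarith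

set_option maxHeartbeats 1000000 in
/-- Lemma 2.2: for `f` with nonempty support there are disjoint
`V₁, V₂ ⊆ supp f`, not both empty, with
`R̄(f) ≥ 1 - √(1 - (1 - φ̄(V₁,V₂))²)`. -/
theorem exists_sub_bipartition_of_dualRayleigh {N : ℕ} (w : Fin N → Fin N → ℝ)
    (hG : IsWeightedGraph w) (f : Fin N → ℝ) (hf : ∃ v, f v ≠ 0) :
    ∃ V₁ V₂ : Finset (Fin N),
      (∀ v ∈ V₁, f v ≠ 0) ∧ (∀ v ∈ V₂, f v ≠ 0) ∧ Disjoint V₁ V₂ ∧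
      (V₁ ∪ V₂).Nonempty ∧
      1 - Real.sqrt (1 - (1 - phibar w V₁ V₂) ^ 2) ≤ dualRayleigh w f := by
  obtain ⟨v₀, hv₀⟩ := hf
  obtain ⟨hsym, hw0, hloop, hdeg⟩ := hG
  set D : ℝ := ∑ u, degree w u * f u ^ 2 with hDdef
  set A : ℝ := 1 / 2 * ∑ u, ∑ v, w u v * (f u + f v) ^ 2 with hAdef
  have hDpos : 0 < D := by
    refine Finset.sum_pos' (fun u _ => mul_nonneg (hdeg u).le (sq_nonneg _)) ⟨v₀, mem_univ _, ?_⟩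
    have := hdeg v₀
    positivity
  have hRay : dualRayleigh w f = A / D := rfl
  have hA0 : 0 ≤ A := by
    rw [hAdef]
    exact mul_nonneg (by norm_num) (Finset.sum_nonneg fun u _ =>
      Finset.sum_nonneg fun v _ => mul_nonneg (hw0 u v) (sq_nonneg _))
  by_cases hAD : D ≤ A
  · refine ⟨{v₀}, ∅, ?_, ?_, ?_, ?_, ?_⟩
    · intro v hv; rw [Finset.mem_singleton] at hv; exact hv ▸ hv₀
    · intro v hv; exact absurd hv (Finset.notMem_empty v)
    · simp
    · simp
    · have h1 : (1:ℝ) ≤ A / D := (one_le_div hDpos).2 hAD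
      have h2 : 0 ≤ Real.sqrt (1 - (1 - phibar w {v₀} ∅) ^ 2) := Real.sqrt_nonneg _
      rw [hRay]; linarith
  push_neg at hAD
  -- the set of positive levels
  set P : Finset ℝ := ((univ : Finset (Fin N)).filter (fun v => f v ≠ 0)).image
    (fun v => |f v|) with hPdef
  have hPpos : ∀ s ∈ P, 0 < s := by
    intro s hs
    rw [hPdef] at hs
    obtain ⟨x, hx, rfl⟩ := Finset.mem_image.1 hs
    exact abs_pos.2 (Finset.mem_filter.1 hx).2
  have hPne : P.Nonempty := by
    refine ⟨|f v₀|, ?_⟩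
    rw [hPdef]
    exact Finset.mem_image.2 ⟨v₀, Finset.mem_filter.2 ⟨Finset.mem_univ _, hv₀⟩, rfl⟩
  -- basic facts about the level sets
  have hdisj : ∀ s ∈ P, Disjoint ((univ : Finset (Fin N)).filter (fun u => s ≤ f u))
      (univ.filter (fun u => f u ≤ -s)) := by
    intro s hs
    have hs0 := hPpos s hs
    rw [Finset.disjoint_left]
    intro u h1 h2
    rw [Finset.mem_filter] at h1 h2
    linarith [h1.2, h2.2]
  have hne : ∀ s ∈ P, (((univ : Finset (Fin N)).filter (fun u => s ≤ f u)) ∪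
      (univ.filter (fun u => f u ≤ -s))).Nonempty := by
    intro s hs
    rw [hPdef] at hs
    obtain ⟨x, hx, rfl⟩ := Finset.mem_image.1 hs
    refine ⟨x, Finset.mem_union.2 ?_⟩
    rcases abs_cases (f x) with ⟨he, _⟩ | ⟨he, _⟩
    · exact Or.inl (Finset.mem_filter.2 ⟨Finset.mem_univ _, he.le⟩)
    · exact Or.inr (Finset.mem_filter.2 ⟨Finset.mem_univ _, by linarith [he.le]⟩)
  have hvolpos : ∀ s ∈ P, 0 < vol w (((univ : Finset (Fin N)).filter (fun u => s ≤ f u)) ∪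
      (univ.filter (fun u => f u ≤ -s))) := by
    intro s hs
    rw [vol]
    exact Finset.sum_pos (fun u _ => hdeg u) (hne s hs)
  have hEwcomm : ∀ B C : Finset (Fin N), Ew w B C = Ew w C B := by
    intro B C
    rw [Ew, Ew, Finset.sum_comm]
    exact Finset.sum_congr rfl fun u _ => Finset.sum_congr rfl fun v _ => hsym v u
  have hEwle : ∀ s ∈ P, 2 * Ew w ((univ : Finset (Fin N)).filter (fun u => s ≤ f u))
      (univ.filter (fun u => f u ≤ -s)) ≤ vol w (((univ : Finset (Fin N)).filter
        (fun u => s ≤ f u)) ∪ (univ.filter (fun u => f u ≤ -s))) := by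
    intro s hs
    have key : ∀ B C : Finset (Fin N), Ew w B C ≤ vol w B := by
      intro B C
      rw [Ew, vol]
      refine Finset.sum_le_sum fun u _ => ?_
      rw [degree]
      exact Finset.sum_le_sum_of_subset_of_nonneg (Finset.subset_univ _) fun v _ _ => hw0 u v
    have e1 := key (univ.filter (fun u => s ≤ f u)) (univ.filter (fun u => f u ≤ -s))
    have e2 := key (univ.filter (fun u => f u ≤ -s)) (univ.filter (fun u => s ≤ f u))
    have e3 := hEwcomm (univ.filter (fun u => s ≤ f u)) (univ.filter (fun u => f u ≤ -s))
    have e4 : vol w (((univ : Finset (Fin N)).filter (fun u => s ≤ f u)) ∪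
        (univ.filter (fun u => f u ≤ -s))) = vol w (univ.filter (fun u => s ≤ f u)) +
        vol w (univ.filter (fun u => f u ≤ -s)) := by
      rw [vol, vol, vol, Finset.sum_union (hdisj s hs)]
    linarith
  have hphile1 : ∀ s ∈ P, phibar w ((univ : Finset (Fin N)).filter (fun u => s ≤ f u))
      (univ.filter (fun u => f u ≤ -s)) ≤ 1 := by
    intro s hs
    rw [phibar, div_le_one (hvolpos s hs)]
    exact hEwle s hs
  have hphimul : ∀ s ∈ P, 2 * Ew w ((univ : Finset (Fin N)).filter (fun u => s ≤ f u))
      (univ.filter (fun u => f u ≤ -s)) = phibar w ((univ : Finset (Fin N)).filter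
        (fun u => s ≤ f u)) (univ.filter (fun u => f u ≤ -s)) * vol w
        (((univ : Finset (Fin N)).filter (fun u => s ≤ f u)) ∪
          (univ.filter (fun u => f u ≤ -s))) := by
    intro s hs
    rw [phibar, div_mul_cancel₀ _ (ne_of_gt (hvolpos s hs))]
  -- summation helpers
  have hrow : ∀ g : Fin N → ℝ, ∑ u, ∑ v, w u v * g u = ∑ u, degree w u * g u := by
    intro g
    refine Finset.sum_congr rfl fun u _ => ?_
    rw [degree, Finset.sum_mul]
  have hcol : ∀ g : Fin N → ℝ, ∑ u, ∑ v, w u v * g v = ∑ v, degree w v * g v := by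
    intro g
    rw [Finset.sum_comm]
    refine Finset.sum_congr rfl fun v _ => ?_
    rw [degree, Finset.sum_mul]
    exact Finset.sum_congr rfl fun u _ => by rw [hsym]
  -- global quantities
  set M : ℝ := ∑ u, ∑ v, w u v * (|f u| * |f v|) with hMdef
  set Pr : ℝ := ∑ u, ∑ v, w u v * (f u * f v) with hPrdef
  set S : ℝ := ∑ u, ∑ v, w u v * (|f u + f v| * (|f u| + |f v|)) with hSdef
  set Q : ℝ := ∑ u, ∑ v, w u v * max (f u * f v) 0 with hQdef
  set Isum : ℝ := ∑ u, ∑ v, w u v * (min (max (f u) 0) (max (-f v) 0) ^ 2 +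
    min (max (-f u) 0) (max (f v) 0) ^ 2) with hIdef
  have h2A : ∑ u, ∑ v, w u v * (f u + f v) ^ 2 = 2 * D + 2 * Pr := by
    calc ∑ u, ∑ v, w u v * (f u + f v) ^ 2
        = ∑ u, ∑ v, (w u v * f u ^ 2 + w u v * f v ^ 2 + 2 * (w u v * (f u * f v))) :=
          Finset.sum_congr rfl fun u _ => Finset.sum_congr rfl fun v _ => by ring
      _ = (∑ u, ∑ v, w u v * f u ^ 2) + (∑ u, ∑ v, w u v * f v ^ 2) +
            2 * ∑ u, ∑ v, w u v * (f u * f v) := by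
          simp only [Finset.sum_add_distrib, Finset.mul_sum]
      _ = 2 * D + 2 * Pr := by
          rw [hrow (fun u => f u ^ 2), hcol (fun v => f v ^ 2), hPrdef, hDdef]; ring
  have habs2 : ∑ u, ∑ v, w u v * (|f u| + |f v|) ^ 2 = 2 * D + 2 * M := by
    calc ∑ u, ∑ v, w u v * (|f u| + |f v|) ^ 2
        = ∑ u, ∑ v, (w u v * f u ^ 2 + w u v * f v ^ 2 + 2 * (w u v * (|f u| * |f v|))) := by
          refine Finset.sum_congr rfl fun u _ => Finset.sum_congr rfl fun v _ => ?_
          rw [add_sq, sq_abs, sq_abs]; ring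
      _ = (∑ u, ∑ v, w u v * f u ^ 2) + (∑ u, ∑ v, w u v * f v ^ 2) +
            2 * ∑ u, ∑ v, w u v * (|f u| * |f v|) := by
          simp only [Finset.sum_add_distrib, Finset.mul_sum]
      _ = 2 * D + 2 * M := by
          rw [hrow (fun u => f u ^ 2), hcol (fun v => f v ^ 2), hMdef, hDdef]; ring
  have hDsplit : ∑ u, ∑ v, w u v * ((f u ^ 2 + f v ^ 2) / 2) = D := by
    calc ∑ u, ∑ v, w u v * ((f u ^ 2 + f v ^ 2) / 2)
        = ∑ u, ∑ v, (w u v * f u ^ 2 / 2 + w u v * f v ^ 2 / 2) :=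
          Finset.sum_congr rfl fun u _ => Finset.sum_congr rfl fun v _ => by ring
      _ = (∑ u, ∑ v, w u v * f u ^ 2) / 2 + (∑ u, ∑ v, w u v * f v ^ 2) / 2 := by
          simp only [Finset.sum_add_distrib, Finset.sum_div]
      _ = D := by
          rw [hrow (fun u => f u ^ 2), hcol (fun v => f v ^ 2), hDdef]; ring
  have hM0 : 0 ≤ M := by
    rw [hMdef]
    exact Finset.sum_nonneg fun u _ => Finset.sum_nonneg fun v _ =>
      mul_nonneg (hw0 u v) (mul_nonneg (abs_nonneg _) (abs_nonneg _))
  have hPr : Pr = A - D := by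
    have : A = 1 / 2 * (2 * D + 2 * Pr) := by rw [hAdef, h2A]
    linarith
  have hMPr : 0 ≤ M + Pr := by
    rw [hMdef, hPrdef, ← Finset.sum_add_distrib]
    refine Finset.sum_nonneg fun u _ => ?_
    rw [← Finset.sum_add_distrib]
    refine Finset.sum_nonneg fun v _ => ?_
    rw [← abs_mul]
    have h1 : 0 ≤ |f u * f v| + f u * f v := by linarith [neg_abs_le (f u * f v)]
    nlinarith [mul_nonneg (hw0 u v) h1]
  have hmax : ∀ x : ℝ, max x 0 = (|x| + x) / 2 := by
    intro x
    rcases le_total x 0 with h | h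
    · rw [max_eq_right h, abs_of_nonpos h]; ring
    · rw [max_eq_left h, abs_of_nonneg h]; ring
  have hQval : Q = (M + Pr) / 2 := by
    rw [hQdef, hMdef, hPrdef]
    calc ∑ u, ∑ v, w u v * max (f u * f v) 0
        = ∑ u, ∑ v, (w u v * (|f u| * |f v|) / 2 + w u v * (f u * f v) / 2) := by
          refine Finset.sum_congr rfl fun u _ => Finset.sum_congr rfl fun v _ => ?_
          rw [hmax, ← abs_mul]; ring
      _ = (∑ u, ∑ v, w u v * (|f u| * |f v|)) / 2 + (∑ u, ∑ v, w u v * (f u * f v)) / 2 := by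
          simp only [Finset.sum_add_distrib, Finset.sum_div]
      _ = _ := by ring
  -- Cauchy-Schwarz
  have hCS : S ≤ Real.sqrt (2 * A) * Real.sqrt (2 * D + 2 * M) := by
    have h1 : S = ∑ p : Fin N × Fin N, (Real.sqrt (w p.1 p.2) * |f p.1 + f p.2|) *
        (Real.sqrt (w p.1 p.2) * (|f p.1| + |f p.2|)) := by
      rw [hSdef, Fintype.sum_prod_type]
      refine Finset.sum_congr rfl fun u _ => Finset.sum_congr rfl fun v _ => ?_
      rw [mul_mul_mul_comm, Real.mul_self_sqrt (hw0 u v)]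
    have h2 : ∑ p : Fin N × Fin N, (Real.sqrt (w p.1 p.2) * |f p.1 + f p.2|) ^ 2 = 2 * A := by
      rw [Fintype.sum_prod_type]
      calc ∑ u, ∑ v, (Real.sqrt (w u v) * |f u + f v|) ^ 2
          = ∑ u, ∑ v, w u v * (f u + f v) ^ 2 := by
            refine Finset.sum_congr rfl fun u _ => Finset.sum_congr rfl fun v _ => ?_
            rw [mul_pow, Real.sq_sqrt (hw0 u v), sq_abs]
        _ = 2 * A := by rw [hAdef]; ring
    have h3 : ∑ p : Fin N × Fin N, (Real.sqrt (w p.1 p.2) * (|f p.1| + |f p.2|)) ^ 2 =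
        2 * D + 2 * M := by
      rw [Fintype.sum_prod_type]
      calc ∑ u, ∑ v, (Real.sqrt (w u v) * (|f u| + |f v|)) ^ 2
          = ∑ u, ∑ v, w u v * (|f u| + |f v|) ^ 2 := by
            refine Finset.sum_congr rfl fun u _ => Finset.sum_congr rfl fun v _ => ?_
            rw [mul_pow, Real.sq_sqrt (hw0 u v)]
        _ = 2 * D + 2 * M := habs2
    calc S = ∑ p : Fin N × Fin N, (Real.sqrt (w p.1 p.2) * |f p.1 + f p.2|) *
          (Real.sqrt (w p.1 p.2) * (|f p.1| + |f p.2|)) := h1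
      _ ≤ Real.sqrt (∑ p : Fin N × Fin N, (Real.sqrt (w p.1 p.2) * |f p.1 + f p.2|) ^ 2) *
          Real.sqrt (∑ p : Fin N × Fin N, (Real.sqrt (w p.1 p.2) * (|f p.1| + |f p.2|)) ^ 2) :=
        Real.sum_mul_le_sqrt_mul_sqrt _ _ _
      _ = Real.sqrt (2 * A) * Real.sqrt (2 * D + 2 * M) := by rw [h2, h3]
  have hsqrt1 : Real.sqrt (2 * A) * Real.sqrt (2 * D + 2 * M) =
      2 * Real.sqrt (A * (D + M)) := by
    rw [← Real.sqrt_mul (by linarith : (0:ℝ) ≤ 2 * A)]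
    rw [show 2 * A * (2 * D + 2 * M) = 2 ^ 2 * (A * (D + M)) by ring]
    rw [Real.sqrt_mul (by norm_num : (0:ℝ) ≤ 2 ^ 2), Real.sqrt_sq (by norm_num : (0:ℝ) ≤ 2)]
  -- the pointwise estimate, summed
  have hmain1 : D - Isum ≤ S / 2 - Q := by
    have h1 : D - Isum = ∑ u, ∑ v, (w u v * ((f u ^ 2 + f v ^ 2) / 2 -
        (min (max (f u) 0) (max (-f v) 0) ^ 2 + min (max (-f u) 0) (max (f v) 0) ^ 2))) := by
      rw [← hDsplit, hIdef, ← Finset.sum_sub_distrib]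
      refine Finset.sum_congr rfl fun u _ => ?_
      rw [← Finset.sum_sub_distrib]
      exact Finset.sum_congr rfl fun v _ => by ring
    have h2 : S / 2 - Q = ∑ u, ∑ v, (w u v * (|f u + f v| * (|f u| + |f v|) / 2 -
        max (f u * f v) 0)) := by
      rw [hSdef, hQdef, Finset.sum_div, ← Finset.sum_sub_distrib]
      refine Finset.sum_congr rfl fun u _ => ?_
      rw [Finset.sum_div, ← Finset.sum_sub_distrib]
      exact Finset.sum_congr rfl fun v _ => by ring
    rw [h1, h2]
    exact Finset.sum_le_sum fun u _ => Finset.sum_le_sum fun v _ =>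
      mul_le_mul_of_nonneg_left (pointwise_bound (f u) (f v)) (hw0 u v)
  -- the sqrt juggling
  set X : ℝ := A * (2 * D - A) with hXdef
  have hX0 : 0 ≤ X := by rw [hXdef]; exact mul_nonneg hA0 (by linarith)
  have hAsqrtX : A ≤ Real.sqrt X := by
    rw [show A = Real.sqrt (A ^ 2) from (Real.sqrt_sq hA0).symm]
    exact Real.sqrt_le_sqrt (by nlinarith)
  have hMlow : D - A ≤ M := by linarith [hMPr, hPr]
  have hstep : Real.sqrt (A * (D + M)) ≤ Real.sqrt X + (M - (D - A)) / 2 := by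
    have hs0 : 0 ≤ M - (D - A) := by linarith
    have hprod : A * (M - (D - A)) ≤ Real.sqrt X * (M - (D - A)) :=
      mul_le_mul_of_nonneg_right hAsqrtX hs0
    have h1 : A * (D + M) ≤ (Real.sqrt X + (M - (D - A)) / 2) ^ 2 := by
      have expand : (Real.sqrt X + (M - (D - A)) / 2) ^ 2 =
          X + Real.sqrt X * (M - (D - A)) + (M - (D - A)) ^ 2 / 4 := by
        calc (Real.sqrt X + (M - (D - A)) / 2) ^ 2
            = Real.sqrt X ^ 2 + Real.sqrt X * (M - (D - A)) + (M - (D - A)) ^ 2 / 4 := by ring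
          _ = _ := by rw [Real.sq_sqrt hX0]
      rw [expand, hXdef]
      nlinarith [hprod, sq_nonneg (M - (D - A))]
    calc Real.sqrt (A * (D + M)) ≤
        Real.sqrt ((Real.sqrt X + (M - (D - A)) / 2) ^ 2) := Real.sqrt_le_sqrt h1
      _ = Real.sqrt X + (M - (D - A)) / 2 :=
        Real.sqrt_sq (by positivity)
  have hDI : D - Isum ≤ Real.sqrt X := by
    have hS2' : S / 2 ≤ Real.sqrt (A * (D + M)) := by
      have := hCS
      rw [hsqrt1] at this
      linarith
    have := hQval
    linarith [hmain1, hstep, hPr]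
  -- per-pair telescoping
  have hpair : ∀ u v : Fin N,
      ∑ s ∈ P, (if s ≤ f u ∧ f v ≤ -s then (s ^ 2 - prevLevel P s ^ 2) else 0)
        = min (max (f u) 0) (max (-f v) 0) ^ 2 := by
    intro u v
    rw [← Finset.sum_filter]
    have hfil : P.filter (fun s => s ≤ f u ∧ f v ≤ -s)
        = P.filter (· ≤ min (max (f u) 0) (max (-f v) 0)) := by
      refine Finset.filter_congr ?_
      intro s hs
      have hs0 := hPpos s hs
      constructor
      · rintro ⟨h1, h2⟩
        simp only [le_min_iff]
        exact ⟨h1.trans (le_max_left _ _), le_trans (by linarith) (le_max_left _ _)⟩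
      · intro h
        have h1 : s ≤ max (f u) 0 := le_trans h (min_le_left _ _)
        have h2 : s ≤ max (-f v) 0 := le_trans h (min_le_right _ _)
        constructor
        · rcases max_cases (f u) 0 with ⟨he, _⟩ | ⟨he, _⟩
          · rwa [he] at h1
          · rw [he] at h1; linarith
        · rcases max_cases (-f v) 0 with ⟨he, _⟩ | ⟨he, _⟩
          · rw [he] at h2; linarith
          · rw [he] at h2; linarith
    have hamem : min (max (f u) 0) (max (-f v) 0) = 0 ∨
        min (max (f u) 0) (max (-f v) 0) ∈ P := by
      rcases le_or_gt (f u) 0 with h | h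
      · left; rw [max_eq_right h, min_eq_left (le_max_right _ _)]
      · rcases le_or_gt 0 (f v) with h' | h'
        · left; rw [max_eq_right (by linarith : -f v ≤ 0), min_eq_right (le_max_right _ _)]
        · right
          rw [max_eq_left h.le, max_eq_left (by linarith : (0:ℝ) ≤ -f v), hPdef]
          rcases le_total (f u) (-f v) with hm | hm
          · rw [min_eq_left hm]
            exact Finset.mem_image.2 ⟨u, Finset.mem_filter.2 ⟨Finset.mem_univ _, ne_of_gt h⟩,
              abs_of_pos h⟩
          · rw [min_eq_right hm]
            exact Finset.mem_image.2 ⟨v, Finset.mem_filter.2 ⟨Finset.mem_univ _, ne_of_lt h'⟩,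
              abs_of_neg h'⟩
    rw [hfil, telescope P hPpos _ hamem]
  -- identity for the volumes
  have hunion : ∀ s ∈ P, ((univ : Finset (Fin N)).filter (fun u => s ≤ f u)) ∪
      (univ.filter (fun u => f u ≤ -s)) = univ.filter (fun u => s ≤ |f u|) := by
    intro s hs
    ext u
    simp only [Finset.mem_union, Finset.mem_filter, Finset.mem_univ, true_and]
    rw [le_abs]
    constructor
    · rintro (h | h)
      · exact Or.inl h
      · exact Or.inr (by linarith)
    · rintro (h | h)
      · exact Or.inl h
      · exact Or.inr (by linarith)
  have hS1 : ∑ s ∈ P, (s ^ 2 - prevLevel P s ^ 2) *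
      vol w (((univ : Finset (Fin N)).filter (fun u => s ≤ f u)) ∪
        (univ.filter (fun u => f u ≤ -s))) = D := by
    calc ∑ s ∈ P, (s ^ 2 - prevLevel P s ^ 2) *
        vol w (((univ : Finset (Fin N)).filter (fun u => s ≤ f u)) ∪
          (univ.filter (fun u => f u ≤ -s)))
        = ∑ s ∈ P, ∑ u, (if s ≤ |f u| then (s ^ 2 - prevLevel P s ^ 2) * degree w u else 0) := by
          refine Finset.sum_congr rfl fun s hs => ?_
          rw [hunion s hs, vol, Finset.sum_filter, Finset.mul_sum]
          exact Finset.sum_congr rfl fun u _ => by split <;> simp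
      _ = ∑ u, ∑ s ∈ P, (if s ≤ |f u| then (s ^ 2 - prevLevel P s ^ 2) * degree w u else 0) :=
          Finset.sum_comm
      _ = D := by
          rw [hDdef]
          refine Finset.sum_congr rfl fun u _ => ?_
          have : ∀ s, (if s ≤ |f u| then (s ^ 2 - prevLevel P s ^ 2) * degree w u else 0)
              = (if s ≤ |f u| then (s ^ 2 - prevLevel P s ^ 2) else 0) * degree w u := by
            intro s; split <;> simp
          rw [Finset.sum_congr rfl fun s _ => this s, ← Finset.sum_mul, ← Finset.sum_filter,
            telescope P hPpos (|f u|) ?_, sq_abs, mul_comm]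
          rcases eq_or_ne (f u) 0 with h | h
          · left; rw [h, abs_zero]
          · right
            rw [hPdef]
            exact Finset.mem_image.2 ⟨u, Finset.mem_filter.2 ⟨Finset.mem_univ _, h⟩, rfl⟩
  -- identity for the edge sums
  have hEwite : ∀ s : ℝ, Ew w ((univ : Finset (Fin N)).filter (fun u => s ≤ f u))
      (univ.filter (fun u => f u ≤ -s)) =
      ∑ u, ∑ v, (if s ≤ f u ∧ f v ≤ -s then w u v else 0) := by
    intro s
    rw [Ew, Finset.sum_filter]
    refine Finset.sum_congr rfl fun u _ => ?_
    by_cases h : s ≤ f u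
    · rw [if_pos h, Finset.sum_filter]
      refine Finset.sum_congr rfl fun v _ => ?_
      by_cases h2 : f v ≤ -s
      · rw [if_pos h2, if_pos ⟨h, h2⟩]
      · rw [if_neg h2, if_neg (fun hc => h2 hc.2)]
    · rw [if_neg h]
      refine (Finset.sum_eq_zero fun v _ => ?_).symm
      exact if_neg (fun hc => h hc.1)
  have hS2 : ∑ s ∈ P, (s ^ 2 - prevLevel P s ^ 2) *
      Ew w (((univ : Finset (Fin N)).filter (fun u => s ≤ f u)))
        (univ.filter (fun u => f u ≤ -s)) =
      ∑ u, ∑ v, w u v * min (max (f u) 0) (max (-f v) 0) ^ 2 := by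
    calc ∑ s ∈ P, (s ^ 2 - prevLevel P s ^ 2) *
        Ew w (((univ : Finset (Fin N)).filter (fun u => s ≤ f u)))
          (univ.filter (fun u => f u ≤ -s))
        = ∑ s ∈ P, ∑ u, ∑ v, (if s ≤ f u ∧ f v ≤ -s then
            (s ^ 2 - prevLevel P s ^ 2) * w u v else 0) := by
          refine Finset.sum_congr rfl fun s hs => ?_
          rw [hEwite s, Finset.mul_sum]
          refine Finset.sum_congr rfl fun u _ => ?_
          rw [Finset.mul_sum]
          exact Finset.sum_congr rfl fun v _ => by split <;> simp
      _ = ∑ u, ∑ v, ∑ s ∈ P, (if s ≤ f u ∧ f v ≤ -s then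
            (s ^ 2 - prevLevel P s ^ 2) * w u v else 0) := by
          rw [Finset.sum_comm]
          exact Finset.sum_congr rfl fun u _ => Finset.sum_comm
      _ = ∑ u, ∑ v, w u v * min (max (f u) 0) (max (-f v) 0) ^ 2 := by
          refine Finset.sum_congr rfl fun u _ => Finset.sum_congr rfl fun v _ => ?_
          have : ∀ s, (if s ≤ f u ∧ f v ≤ -s then (s ^ 2 - prevLevel P s ^ 2) * w u v else 0)
              = (if s ≤ f u ∧ f v ≤ -s then (s ^ 2 - prevLevel P s ^ 2) else 0) * w u v := by
            intro s; split <;> simp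
          rw [Finset.sum_congr rfl fun s _ => this s, ← Finset.sum_mul, hpair u v, mul_comm]
  -- symmetrization
  have hswap : ∑ u, ∑ v, w u v * min (max (-f u) 0) (max (f v) 0) ^ 2
      = ∑ u, ∑ v, w u v * min (max (f u) 0) (max (-f v) 0) ^ 2 := by
    rw [Finset.sum_comm]
    refine Finset.sum_congr rfl fun x _ => Finset.sum_congr rfl fun y _ => ?_
    rw [hsym y x, min_comm]
  have hIval : Isum = 2 * ∑ u, ∑ v, w u v * min (max (f u) 0) (max (-f v) 0) ^ 2 := by
    rw [hIdef]
    calc ∑ u, ∑ v, w u v * (min (max (f u) 0) (max (-f v) 0) ^ 2 +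
          min (max (-f u) 0) (max (f v) 0) ^ 2)
        = (∑ u, ∑ v, w u v * min (max (f u) 0) (max (-f v) 0) ^ 2) +
          ∑ u, ∑ v, w u v * min (max (-f u) 0) (max (f v) 0) ^ 2 := by
          simp only [mul_add, Finset.sum_add_distrib]
      _ = _ := by rw [hswap]; ring
  -- choose the best level
  obtain ⟨s₀, hs₀P, hs₀max⟩ := P.exists_max_image (fun s =>
    phibar w ((univ : Finset (Fin N)).filter (fun u => s ≤ f u))
      (univ.filter (fun u => f u ≤ -s))) hPne
  set φ : ℝ := phibar w ((univ : Finset (Fin N)).filter (fun u => s₀ ≤ f u))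
    (univ.filter (fun u => f u ≤ -s₀)) with hφdef
  have hφ1 : φ ≤ 1 := hphile1 s₀ hs₀P
  have hIub : Isum ≤ φ * D := by
    have hφ0 : 0 ≤ φ := by
      rw [hφdef, phibar]
      have h2E : 0 ≤ Ew w ((univ : Finset (Fin N)).filter (fun u => s₀ ≤ f u))
          (univ.filter (fun u => f u ≤ -s₀)) :=
        Finset.sum_nonneg fun u _ => Finset.sum_nonneg fun v _ => hw0 u v
      exact div_nonneg (by linarith only [h2E]) (hvolpos s₀ hs₀P).le
    calc Isum = ∑ s ∈ P, (s ^ 2 - prevLevel P s ^ 2) * (2 *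
          Ew w (((univ : Finset (Fin N)).filter (fun u => s ≤ f u)))
            (univ.filter (fun u => f u ≤ -s))) := by
          rw [hIval, ← hS2, Finset.mul_sum]
          exact Finset.sum_congr rfl fun s _ => by ring
      _ ≤ ∑ s ∈ P, (s ^ 2 - prevLevel P s ^ 2) * (φ *
          vol w (((univ : Finset (Fin N)).filter (fun u => s ≤ f u)) ∪
            (univ.filter (fun u => f u ≤ -s)))) := by
          refine Finset.sum_le_sum fun s hs => ?_
          have hΔ0 : 0 ≤ s ^ 2 - prevLevel P s ^ 2 := by
            have h1 := prevLevel_nonneg P s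
            have h2 := prevLevel_lt P (hPpos s hs)
            nlinarith
          refine mul_le_mul_of_nonneg_left ?_ hΔ0
          rw [hphimul s hs]
          have hple := hs₀max s hs
          have hvol0 : 0 ≤ vol w (((univ : Finset (Fin N)).filter (fun u => s ≤ f u)) ∪
              (univ.filter (fun u => f u ≤ -s))) := (hvolpos s hs).le
          exact mul_le_mul_of_nonneg_right hple hvol0
      _ = φ * ∑ s ∈ P, (s ^ 2 - prevLevel P s ^ 2) *
          vol w (((univ : Finset (Fin N)).filter (fun u => s ≤ f u)) ∪
            (univ.filter (fun u => f u ≤ -s))) := by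
          rw [Finset.mul_sum]
          exact Finset.sum_congr rfl fun s _ => by ring
      _ = φ * D := by rw [hS1]
  -- final assembly
  have hφlb : D * (1 - φ) ≤ Real.sqrt X := by linarith only [hIub, hDI]
  have h1φ0 : 0 ≤ 1 - φ := by linarith only [hφ1]
  have hsq' : (1 - φ) ^ 2 * D ^ 2 ≤ X := by
    have h := mul_le_mul hφlb hφlb (mul_nonneg hDpos.le h1φ0) (Real.sqrt_nonneg X)
    rw [Real.mul_self_sqrt hX0] at h
    calc (1 - φ) ^ 2 * D ^ 2 = (D * (1 - φ)) * (D * (1 - φ)) := by ring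
      _ ≤ X := h
  refine ⟨(univ : Finset (Fin N)).filter (fun u => s₀ ≤ f u),
    univ.filter (fun u => f u ≤ -s₀), ?_, ?_, hdisj s₀ hs₀P, hne s₀ hs₀P, ?_⟩
  · intro v hv
    rw [Finset.mem_filter] at hv
    have := hPpos s₀ hs₀P
    intro h0
    rw [h0] at hv
    linarith [hv.2]
  · intro v hv
    rw [Finset.mem_filter] at hv
    have := hPpos s₀ hs₀P
    intro h0
    rw [h0] at hv
    linarith [hv.2]
  · rw [hRay, ← hφdef]
    have hsq'' : (1 - φ) ^ 2 * D ^ 2 ≤ A * (2 * D - A) := by rw [← hXdef]; exact hsq'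
    exact final_aux hDpos hAD hA0 hφ1 hsq''



end DualCheeger
end

section
/- Spreading lemma: let f₁,…,f_k: V → ℝ be l²(V,μ)-orthonormal functions on a weighted finite graph and let F(v) = (f₁(v),…,f_k(v)). If 0 < r < 1 and S ⊆ V satisfies d̄_F(u,v) ≤ r for all u,v ∈ S ∩ supp(F), then ℰ_S ≤ ℰ_V / (k(1 − r²)). -/
/-!
Pick `v₀ ∈ S` with `F v₀ ≠ 0` and let `ψ = F v₀ / ‖F v₀‖`. Orthonormality of the `fᵢ` makes
`u ↦ ⟪F u, ψ⟫` a unit vector of `l²(V, μ)`, so `∑ᵤ d_u ⟪F u, ψ⟫² = 1`, while `ℰ_V = k`.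
For unit vectors `1 - ⟪a, b⟫² ≤ ‖a ∓ b‖²`, so `d̄_F(u, v₀) ≤ r` gives
`(1 - r²) ‖F u‖² ≤ ⟪F u, ψ⟫²` on `S`; summing, `(1 - r²) ℰ_S ≤ 1 = ℰ_V / k`.
-/

open Finset

namespace DualCheeger

variable {N : ℕ}

section Geometry

open scoped InnerProductSpace

variable {E : Type*} [NormedAddCommGroup E] [InnerProductSpace ℝ E]

theorem one_sub_inner_sq_le_norm_sub_sq {a b : E} (ha : ‖a‖ = 1) (hb : ‖b‖ = 1) :
    1 - ⟪a, b⟫_ℝ ^ 2 ≤ ‖a - b‖ ^ 2 := by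
  have hchord : ‖a - b‖ ^ 2 = 2 - 2 * ⟪a, b⟫_ℝ := by
    rw [norm_sub_sq_real, ha, hb]; ring
  have hcs : ⟪a, b⟫_ℝ ≤ 1 := by simpa [ha, hb] using real_inner_le_norm a b
  -- `1 - t² = (1 - t)(1 + t)` and `1 + t ≤ 2`
  nlinarith

theorem one_sub_sq_le_inner_sq_of_min_norm_le {a b : E} {r : ℝ} (ha : ‖a‖ = 1) (hb : ‖b‖ = 1)
    (h : min ‖a - b‖ ‖a + b‖ ≤ r) : 1 - r ^ 2 ≤ ⟪a, b⟫_ℝ ^ 2 := by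
  rcases min_le_iff.mp h with h | h
  · nlinarith [one_sub_inner_sq_le_norm_sub_sq ha hb, norm_nonneg (a - b)]
  · have hneg := one_sub_inner_sq_le_norm_sub_sq ha (b := -b) (by rwa [norm_neg])
    rw [sub_neg_eq_add, inner_neg_right, neg_sq] at hneg
    nlinarith [norm_nonneg (a + b)]

theorem one_sub_sq_mul_norm_sq_le_inner_sq {x ψ : E} {r : ℝ} (hψ : ‖ψ‖ = 1)
    (h : min ‖‖x‖⁻¹ • x - ψ‖ ‖‖x‖⁻¹ • x + ψ‖ ≤ r) :
    (1 - r ^ 2) * ‖x‖ ^ 2 ≤ ⟪x, ψ⟫_ℝ ^ 2 := by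
  rcases eq_or_ne x 0 with rfl | hx
  · simp
  have hunit := one_sub_sq_le_inner_sq_of_min_norm_le (norm_smul_inv_norm hx) hψ h
  have hscale : ⟪x, ψ⟫_ℝ = ‖x‖ * ⟪‖x‖⁻¹ • x, ψ⟫_ℝ := by
    rw [real_inner_smul_left, mul_inv_cancel_left₀ (norm_ne_zero_iff.mpr hx)]
  rw [hscale, mul_pow, mul_comm]
  exact mul_le_mul_of_nonneg_left hunit (sq_nonneg _)

end Geometry

section Orthonormal

open scoped InnerProductSpace

variable {ι : Type*} [Fintype ι] {k : ℕ} {d : ι → ℝ} {F : ι → EuclideanSpace ℝ (Fin k)}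

theorem sum_mul_inner_sq_eq_norm_sq
    (hF : ∀ i j, ∑ u, d u * F u i * F u j = if i = j then (1 : ℝ) else 0)
    (ψ : EuclideanSpace ℝ (Fin k)) : ∑ u, d u * ⟪F u, ψ⟫_ℝ ^ 2 = ‖ψ‖ ^ 2 := by
  have hinner : ∀ u, ⟪F u, ψ⟫_ℝ = ∑ i, F u i * ψ i := fun u => by
    simp [PiLp.inner_apply, mul_comm]
  calc ∑ u, d u * ⟪F u, ψ⟫_ℝ ^ 2
      = ∑ i, ∑ j, ψ i * ψ j * ∑ u, d u * F u i * F u j := by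
        simp_rw [hinner, sq, Finset.sum_mul_sum, Finset.mul_sum]
        rw [Finset.sum_comm]
        refine Finset.sum_congr rfl fun i _ => ?_
        rw [Finset.sum_comm]
        exact Finset.sum_congr rfl fun j _ => Finset.sum_congr rfl fun u _ => by ring
    _ = ‖ψ‖ ^ 2 := by rw [EuclideanSpace.real_norm_sq_eq]; simp [hF, sq]

theorem sum_mul_norm_sq_eq_card
    (hF : ∀ i j, ∑ u, d u * F u i * F u j = if i = j then (1 : ℝ) else 0) :
    ∑ u, d u * ‖F u‖ ^ 2 = k := by
  calc ∑ u, d u * ‖F u‖ ^ 2 = ∑ i, ∑ u, d u * F u i * F u i := by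
        simp_rw [EuclideanSpace.real_norm_sq_eq, Finset.mul_sum, sq, mul_assoc]
        exact Finset.sum_comm
    _ = k := by simp [hF]

theorem one_sub_sq_mul_sum_le_one (hd : ∀ u, 0 ≤ d u)
    (hF : ∀ i j, ∑ u, d u * F u i * F u j = if i = j then (1 : ℝ) else 0)
    {ψ : EuclideanSpace ℝ (Fin k)} (hψ : ‖ψ‖ = 1) {r : ℝ} {S : Finset ι}
    (hS : ∀ u ∈ S, F u ≠ 0 → min ‖‖F u‖⁻¹ • F u - ψ‖ ‖‖F u‖⁻¹ • F u + ψ‖ ≤ r) :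
    (1 - r ^ 2) * ∑ u ∈ S, d u * ‖F u‖ ^ 2 ≤ 1 := by
  have hpoint : ∀ u ∈ S, (1 - r ^ 2) * ‖F u‖ ^ 2 ≤ ⟪F u, ψ⟫_ℝ ^ 2 := fun u hu => by
    rcases eq_or_ne (F u) 0 with h0 | hne
    · simp [h0]
    · exact one_sub_sq_mul_norm_sq_le_inner_sq hψ (hS u hu hne)
  calc (1 - r ^ 2) * ∑ u ∈ S, d u * ‖F u‖ ^ 2
      = ∑ u ∈ S, d u * ((1 - r ^ 2) * ‖F u‖ ^ 2) := by
        rw [Finset.mul_sum]; exact Finset.sum_congr rfl fun u _ => by ring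
    _ ≤ ∑ u ∈ S, d u * ⟪F u, ψ⟫_ℝ ^ 2 :=
        Finset.sum_le_sum fun u hu => mul_le_mul_of_nonneg_left (hpoint u hu) (hd u)
    _ ≤ ∑ u, d u * ⟪F u, ψ⟫_ℝ ^ 2 :=
        Finset.sum_le_sum_of_subset_of_nonneg (Finset.subset_univ S)
          fun u _ _ => mul_nonneg (hd u) (sq_nonneg _)
    _ = 1 := by rw [sum_mul_inner_sq_eq_norm_sq hF, hψ, one_pow]

end Orthonormal

/-- Lemma 5.2 (spreading lemma): if `S ∩ supp F` has `d̄_F`-diameter at most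
`r < 1`, then `ℰ_S ≤ ℰ_V / (k (1 - r²))`. -/
theorem spreading_lemma {N k : ℕ} (w : Fin N → Fin N → ℝ)
    (hG : IsWeightedGraph w) (f : Fin k → Fin N → ℝ)
    (horth : ∀ i j, (∑ u, degree w u * f i u * f j u) = if i = j then (1 : ℝ) else 0)
    (F : Fin N → EuclideanSpace ℝ (Fin k)) (hF : ∀ v i, F v i = f i v)
    (r : ℝ) (hr0 : 0 < r) (hr1 : r < 1) (S : Finset (Fin N))
    (hdiam : ∀ u ∈ S, F u ≠ 0 → ∀ v ∈ S, F v ≠ 0 → dbar F u v ≤ r) :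
    mass w F S ≤ mass w F Finset.univ / (k * (1 - r ^ 2)) := by
  have hd : ∀ u, 0 ≤ degree w u := fun u => (hG.2.2.2 u).le
  have hForth : ∀ i j, ∑ u, degree w u * F u i * F u j = if i = j then (1 : ℝ) else 0 := by
    simpa only [hF] using horth
  have hr : 0 < 1 - r ^ 2 := by nlinarith
  have hmassS : 0 ≤ mass w F S := Finset.sum_nonneg fun u _ => mul_nonneg (hd u) (sq_nonneg _)
  rw [show mass w F Finset.univ = k from sum_mul_norm_sq_eq_card hForth]
  by_cases hsupp : ∃ v ∈ S, F v ≠ 0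
  · obtain ⟨v, hvS, hv⟩ := hsupp
    have hk : (0 : ℝ) < k := by
      have : 0 < k := Nat.pos_of_ne_zero fun hk0 => hv (by subst hk0; ext i; exact i.elim0)
      exact_mod_cast this
    have hbound : (1 - r ^ 2) * mass w F S ≤ 1 :=
      one_sub_sq_mul_sum_le_one hd hForth (norm_smul_inv_norm hv)
        fun u hu hu0 => hdiam u hu hu0 v hvS hv
    rw [le_div_iff₀ (by positivity)]
    nlinarith
  · simp only [not_exists, not_and, not_not] at hsupp
    have hzero : mass w F S = 0 := Finset.sum_eq_zero fun u hu => by simp [hsupp u hu]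
    rw [hzero]
    positivity

end DualCheeger
end
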